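/- The function h₂: [0,1] → [0,1] defined piecewise by h₂(x₁) = (5 − x₁ − √(x₁² + 6x₁ + 13))/4 on [0, β₁], h₂(x₁) = √(8x₁ + 54) − x₁ − 7 on [β₁, β₂], h₂(x₁) = x₁ on [β₂, β₃], h₂(x₁) = −(4x₁² − 6x₁ + 5)/(2(x₁ − 4)) on [β₃, β₄], h₂(x₁) = √(12x₁ + 42) − 6 − x₁ on [β₄, β₅], and h₂(x₁) = 3/2 − (x₁ + √(x₁² − 4x₁ + 16))/4 on [β₅, 1], is well defined (the branch formulas agree at each βᵢ) and continuous on [0,1]; it is moreover differentiable at β₁, β₄ and β₅, and satisfies h₂(0) = h₂(1) = (5 − √13)/4. -/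

import Mathlib

noncomputable def β₁ : ℝ := (3/2) * Real.sqrt 2 - 2
noncomputable def β₂ : ℝ := (Real.sqrt 30 - 5)/2
noncomputable def β₃ : ℝ := (7 - Real.sqrt 19)/6
noncomputable def β₄ : ℝ := (11 - 3 * Real.sqrt 11)/2
noncomputable def β₅ : ℝ := (7 - 3 * Real.sqrt 3)/2

/-- The optimal second-stage threshold function in Robbins' problem with 4 observations. -/
noncomputable def h₂ (x : ℝ) : ℝ :=
  if x ≤ β₁ then (5 - x - Real.sqrt (x^2 + 6*x + 13))/4
  else if x ≤ β₂ then Real.sqrt (8*x + 54) - x - 7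
  else if x ≤ β₃ then x
  else if x ≤ β₄ then -(4*x^2 - 6*x + 5)/(2*(x - 4))
  else if x ≤ β₅ then Real.sqrt (12*x + 42) - 6 - x
  else 3/2 - (x + Real.sqrt (x^2 - 4*x + 16))/4

/-!
At each junction point the square roots in the adjacent branches are perfect squares in the
quadratic field `ℚ(√2)`, `ℚ(√30)`, `ℚ(√11)` or `ℚ(√3)` (and `β₃` is a root of `6x² - 14x + 5`),
so the agreement of the branch formulas, and at `β₁`, `β₄`, `β₅` of their derivatives, is an
identity in that field. Continuity follows by gluing continuous pieces along
closed half-lines, differentiability by gluing one-sided derivatives, and the range by elementary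
bounds on each branch.
-/

open Set Filter

theorem HasDerivAt.if_le {F : Type*} [NormedAddCommGroup F] [NormedSpace ℝ F]
    {f g : ℝ → F} {f' : F} {a : ℝ} (hf : HasDerivAt f f' a) (hg : HasDerivAt g f' a)
    (hfg : f a = g a) : HasDerivAt (fun x => if x ≤ a then f x else g x) f' a := by
  have hle : HasDerivWithinAt (fun x => if x ≤ a then f x else g x) f' (Iic a) a :=
    hf.hasDerivWithinAt.congr (fun x hx => if_pos hx) (if_pos le_rfl)
  have hge : HasDerivWithinAt (fun x => if x ≤ a then f x else g x) f' (Ici a) a := by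
    refine hg.hasDerivWithinAt.congr (fun x hx => ?_) (by rw [if_pos le_rfl, hfg])
    split_ifs with h
    · rw [le_antisymm h hx, hfg]
    · rfl
  simpa only [Iic_union_Ici, hasDerivWithinAt_univ] using hle.union hge

lemma β₁_mem_Ioo : β₁ ∈ Ioo 0 0.13 := by
  have := (Real.lt_sqrt (by norm_num)).2 (by norm_num : (1.414 : ℝ) ^ 2 < 2)
  have := (Real.sqrt_lt' (by norm_num)).2 (by norm_num : (2 : ℝ) < 1.415 ^ 2)
  constructor <;> unfold β₁ <;> linarith

lemma β₂_mem_Ioo : β₂ ∈ Ioo 0.23 0.24 := by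
  have := (Real.lt_sqrt (by norm_num)).2 (by norm_num : (5.477 : ℝ) ^ 2 < 30)
  have := (Real.sqrt_lt' (by norm_num)).2 (by norm_num : (30 : ℝ) < 5.478 ^ 2)
  constructor <;> unfold β₂ <;> linarith

lemma β₃_mem_Ioo : β₃ ∈ Ioo 0.44 0.45 := by
  have := (Real.lt_sqrt (by norm_num)).2 (by norm_num : (4.358 : ℝ) ^ 2 < 19)
  have := (Real.sqrt_lt' (by norm_num)).2 (by norm_num : (19 : ℝ) < 4.359 ^ 2)
  constructor <;> unfold β₃ <;> linarith

lemma β₄_mem_Ioo : β₄ ∈ Ioo 0.52 0.53 := by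
  have := (Real.lt_sqrt (by norm_num)).2 (by norm_num : (3.316 : ℝ) ^ 2 < 11)
  have := (Real.sqrt_lt' (by norm_num)).2 (by norm_num : (11 : ℝ) < 3.317 ^ 2)
  constructor <;> unfold β₄ <;> linarith

lemma β₅_mem_Ioo : β₅ ∈ Ioo 0.9 0.91 := by
  have := (Real.lt_sqrt (by norm_num)).2 (by norm_num : (1.732 : ℝ) ^ 2 < 3)
  have := (Real.sqrt_lt' (by norm_num)).2 (by norm_num : (3 : ℝ) < 1.733 ^ 2)
  constructor <;> unfold β₅ <;> linarith

lemma β₁_lt_β₂ : β₁ < β₂ := β₁_mem_Ioo.2.trans (by norm_num) |>.trans β₂_mem_Ioo.1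
lemma β₂_lt_β₃ : β₂ < β₃ := β₂_mem_Ioo.2.trans (by norm_num) |>.trans β₃_mem_Ioo.1
lemma β₃_lt_β₄ : β₃ < β₄ := β₃_mem_Ioo.2.trans (by norm_num) |>.trans β₄_mem_Ioo.1
lemma β₄_lt_β₅ : β₄ < β₅ := β₄_mem_Ioo.2.trans (by norm_num) |>.trans β₅_mem_Ioo.1

namespace h₂

noncomputable def branch₁ (x : ℝ) : ℝ := (5 - x - √(x^2 + 6*x + 13))/4
noncomputable def branch₂ (x : ℝ) : ℝ := √(8*x + 54) - x - 7
noncomputable def branch₄ (x : ℝ) : ℝ := -(4*x^2 - 6*x + 5)/(2*(x - 4))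
noncomputable def branch₅ (x : ℝ) : ℝ := √(12*x + 42) - 6 - x
noncomputable def branch₆ (x : ℝ) : ℝ := 3/2 - (x + √(x^2 - 4*x + 16))/4

lemma eq_ite (x : ℝ) : h₂ x = if x ≤ β₁ then branch₁ x else if x ≤ β₂ then branch₂ x
    else if x ≤ β₃ then x else if x ≤ β₄ then branch₄ x
    else if x ≤ β₅ then branch₅ x else branch₆ x := rfl

lemma hasDerivAt_branch₁ (x : ℝ) :
    HasDerivAt branch₁ (-(1 + (x + 3) / √(x^2 + 6*x + 13)) / 4) x := by
  have hq : HasDerivAt (fun y => y^2 + 6*y + 13) (2*x + 6) x := by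
    simpa using ((hasDerivAt_pow 2 x).add ((hasDerivAt_id x).const_mul 6)).add_const 13
  refine (((hasDerivAt_id x).const_sub 5).sub
    (hq.sqrt (by nlinarith [sq_nonneg (x + 3)]))).div_const 4 |>.congr_deriv ?_
  ring

lemma hasDerivAt_branch₂ {x : ℝ} (hx : 8*x + 54 ≠ 0) :
    HasDerivAt branch₂ (4 / √(8*x + 54) - 1) x := by
  have hq : HasDerivAt (fun y => 8*y + 54) 8 x := by
    simpa using ((hasDerivAt_id x).const_mul 8).add_const 54
  refine ((hq.sqrt hx).sub (hasDerivAt_id x)).sub_const 7 |>.congr_deriv ?_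
  ring

lemma hasDerivAt_branch₄ {x : ℝ} (hx : x ≠ 4) :
    HasDerivAt branch₄ (-(4*x^2 - 32*x + 19) / (2*(x - 4)^2)) x := by
  have hn : HasDerivAt (fun y => -(4*y^2 - 6*y + 5)) (-(8*x - 6)) x :=
    ((((hasDerivAt_pow 2 x).const_mul 4).sub
      ((hasDerivAt_id x).const_mul 6)).add_const 5).neg.congr_deriv (by ring)
  have hd : HasDerivAt (fun y => 2*(y - 4)) 2 x := by
    simpa using ((hasDerivAt_id x).sub_const 4).const_mul 2
  have hx' : x - 4 ≠ 0 := sub_ne_zero.2 hx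
  refine hn.div hd (by simpa using hx') |>.congr_deriv ?_
  field_simp
  ring

lemma hasDerivAt_branch₅ {x : ℝ} (hx : 12*x + 42 ≠ 0) :
    HasDerivAt branch₅ (6 / √(12*x + 42) - 1) x := by
  have hq : HasDerivAt (fun y => 12*y + 42) 12 x := by
    simpa using ((hasDerivAt_id x).const_mul 12).add_const 42
  refine ((hq.sqrt hx).sub_const 6).sub (hasDerivAt_id x) |>.congr_deriv ?_
  ring

lemma hasDerivAt_branch₆ (x : ℝ) :
    HasDerivAt branch₆ (-(1 + (x - 2) / √(x^2 - 4*x + 16)) / 4) x := by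
  have hq : HasDerivAt (fun y => y^2 - 4*y + 16) (2*x - 4) x := by
    simpa using ((hasDerivAt_pow 2 x).sub ((hasDerivAt_id x).const_mul 4)).add_const 16
  refine (((hasDerivAt_id x).add (hq.sqrt (by nlinarith [sq_nonneg (x - 2)]))).div_const 4
    |>.const_sub (3/2)) |>.congr_deriv ?_
  ring

-- `radicandᵢ` is the expression under the square root in `branchᵢ`.
lemma sqrt_radicand₁_β₁ : √(β₁^2 + 6*β₁ + 13) = 3 + √2/2 := by
  rw [show β₁^2 + 6*β₁ + 13 = (3 + √2/2)^2 by
    unfold β₁; linear_combination 2 * Real.sq_sqrt (show (0:ℝ) ≤ 2 by norm_num)]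
  exact Real.sqrt_sq (by positivity)

lemma sqrt_radicand₂_β₁ : √(8*β₁ + 54) = 6 + √2 := by
  rw [show 8*β₁ + 54 = (6 + √2)^2 by
    unfold β₁; linear_combination -Real.sq_sqrt (show (0:ℝ) ≤ 2 by norm_num)]
  exact Real.sqrt_sq (by positivity)

lemma sqrt_radicand₂_β₂ : √(8*β₂ + 54) = 2 + √30 := by
  rw [show 8*β₂ + 54 = (2 + √30)^2 by
    unfold β₂; linear_combination -Real.sq_sqrt (show (0:ℝ) ≤ 30 by norm_num)]
  exact Real.sqrt_sq (by positivity)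

lemma sqrt_radicand₅_β₄ : √(12*β₄ + 42) = 3 * √11 - 3 := by
  have h11 := Real.sq_sqrt (show (0:ℝ) ≤ 11 by norm_num)
  rw [show 12*β₄ + 42 = (3 * √11 - 3)^2 by unfold β₄; linear_combination -9 * h11]
  exact Real.sqrt_sq (by nlinarith [Real.sqrt_nonneg 11])

lemma sqrt_radicand₅_β₅ : √(12*β₅ + 42) = 9 - √3 := by
  have h3 := Real.sq_sqrt (show (0:ℝ) ≤ 3 by norm_num)
  rw [show 12*β₅ + 42 = (9 - √3)^2 by unfold β₅; linear_combination -h3]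
  exact Real.sqrt_sq (by nlinarith [Real.sqrt_nonneg 3])

lemma sqrt_radicand₆_β₅ : √(β₅^2 - 4*β₅ + 16) = (9 - √3)/2 := by
  have h3 := Real.sq_sqrt (show (0:ℝ) ≤ 3 by norm_num)
  rw [show β₅^2 - 4*β₅ + 16 = ((9 - √3)/2)^2 by unfold β₅; linear_combination 2 * h3]
  exact Real.sqrt_sq (by nlinarith [Real.sqrt_nonneg 3])

lemma branch₁_β₁ : branch₁ β₁ = branch₂ β₁ := by
  rw [branch₁, branch₂, sqrt_radicand₁_β₁, sqrt_radicand₂_β₁]; unfold β₁; ring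

lemma branch₂_β₂ : branch₂ β₂ = β₂ := by
  rw [branch₂, sqrt_radicand₂_β₂]; unfold β₂; ring

lemma branch₄_β₃ : branch₄ β₃ = β₃ := by
  rw [branch₄, div_eq_iff (by linarith [β₃_mem_Ioo.2])]
  unfold β₃; linear_combination -Real.sq_sqrt (show (0:ℝ) ≤ 19 by norm_num) / 6

lemma branch₄_β₄ : branch₄ β₄ = branch₅ β₄ := by
  rw [branch₄, branch₅, sqrt_radicand₅_β₄, div_eq_iff (by linarith [β₄_mem_Ioo.2])]
  unfold β₄; linear_combination (9/2) * Real.sq_sqrt (show (0:ℝ) ≤ 11 by norm_num)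

lemma branch₅_β₅ : branch₅ β₅ = branch₆ β₅ := by
  rw [branch₅, branch₆, sqrt_radicand₅_β₅, sqrt_radicand₆_β₅]; unfold β₅; ring

lemma deriv_branch₁_eq_deriv_branch₂_β₁ :
    -(1 + (β₁ + 3) / √(β₁^2 + 6*β₁ + 13)) / 4 = 4 / √(8*β₁ + 54) - 1 := by
  have : 0 < √2 := by positivity
  rw [sqrt_radicand₁_β₁, sqrt_radicand₂_β₁]
  unfold β₁
  field_simp
  ring

lemma deriv_branch₄_eq_deriv_branch₅_β₄ :
    -(4*β₄^2 - 32*β₄ + 19) / (2*(β₄ - 4)^2) = 6 / √(12*β₄ + 42) - 1 := by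
  have h11 := Real.sq_sqrt (show (0:ℝ) ≤ 11 by norm_num)
  have : √11 - 1 ≠ 0 := by nlinarith [Real.sqrt_nonneg 11]
  have : β₄ - 4 ≠ 0 := by linarith [β₄_mem_Ioo.2]
  rw [sqrt_radicand₅_β₄]
  field_simp
  unfold β₄
  linear_combination (27/2) * (1 - √11) * h11

lemma deriv_branch₅_eq_deriv_branch₆_β₅ :
    6 / √(12*β₅ + 42) - 1 = -(1 + (β₅ - 2) / √(β₅^2 - 4*β₅ + 16)) / 4 := by
  have : 9 - √3 ≠ 0 := by nlinarith [Real.sqrt_nonneg 3, Real.sq_sqrt (show (0:ℝ) ≤ 3 by norm_num)]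
  rw [sqrt_radicand₅_β₅, sqrt_radicand₆_β₅]
  field_simp
  unfold β₅
  ring

lemma branch₁_mem_Icc {x : ℝ} (hx : x ∈ Icc (0:ℝ) (1/2)) : branch₁ x ∈ Icc 0 1 := by
  obtain ⟨hx0, hx1⟩ := hx
  have hup : √(x^2 + 6*x + 13) ≤ 5 - x := (Real.sqrt_le_left (by linarith)).2 (by nlinarith)
  have hlo : 1 - x ≤ √(x^2 + 6*x + 13) :=
    (Real.le_sqrt (by linarith) (by positivity)).2 (by nlinarith)
  constructor <;> unfold branch₁ <;> linarith

lemma branch₂_mem_Icc {x : ℝ} (hx : x ∈ Icc (0:ℝ) (1/2)) : branch₂ x ∈ Icc 0 1 := by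
  obtain ⟨hx0, hx1⟩ := hx
  have hup : √(8*x + 54) ≤ x + 8 := (Real.sqrt_le_left (by linarith)).2 (by nlinarith)
  have hlo : x + 7 ≤ √(8*x + 54) := (Real.le_sqrt (by linarith) (by linarith)).2 (by nlinarith)
  constructor <;> unfold branch₂ <;> linarith

lemma branch₄_mem_Icc {x : ℝ} (hx : x ∈ Icc (0:ℝ) 1) : branch₄ x ∈ Icc 0 1 := by
  obtain ⟨hx0, hx1⟩ := hx
  have hd : 0 < 2*(4 - x) := by linarith
  have he : branch₄ x = (4*x^2 - 6*x + 5) / (2*(4 - x)) := by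
    rw [branch₄, div_eq_div_iff (by linarith) hd.ne']; ring
  rw [he]
  exact ⟨div_nonneg (by nlinarith [sq_nonneg (4*x - 3)]) hd.le, (div_le_one hd).2 (by nlinarith)⟩

lemma branch₅_mem_Icc {x : ℝ} (hx : x ∈ Icc (0:ℝ) 1) : branch₅ x ∈ Icc 0 1 := by
  obtain ⟨hx0, hx1⟩ := hx
  have hup : √(12*x + 42) ≤ x + 7 := (Real.sqrt_le_left (by linarith)).2 (by nlinarith)
  have hlo : x + 6 ≤ √(12*x + 42) := (Real.le_sqrt (by linarith) (by linarith)).2 (by nlinarith)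
  constructor <;> unfold branch₅ <;> linarith

lemma branch₆_mem_Icc {x : ℝ} (hx : x ∈ Icc (0:ℝ) 1) : branch₆ x ∈ Icc 0 1 := by
  obtain ⟨hx0, hx1⟩ := hx
  have hup : √(x^2 - 4*x + 16) ≤ 6 - x := (Real.sqrt_le_left (by linarith)).2 (by nlinarith)
  have hlo : 2 - x ≤ √(x^2 - 4*x + 16) :=
    (Real.le_sqrt (by linarith) (by nlinarith)).2 (by nlinarith)
  constructor <;> unfold branch₆ <;> linarith

end h₂

open h₂

lemma h₂_mem_Icc {x : ℝ} (hx : x ∈ Icc (0:ℝ) 1) : h₂ x ∈ Icc 0 1 := by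
  have hβ₂ : β₂ ≤ 1/2 := β₂_mem_Ioo.2.le.trans (by norm_num)
  rw [eq_ite]
  split_ifs
  · exact branch₁_mem_Icc ⟨hx.1, by linarith [β₁_lt_β₂]⟩
  · exact branch₂_mem_Icc ⟨hx.1, by linarith⟩
  · exact hx
  · exact branch₄_mem_Icc hx
  · exact branch₅_mem_Icc hx
  · exact branch₆_mem_Icc hx

lemma h₂_eq_of_le_β₂ {x : ℝ} (hx : x ≤ β₂) :
    h₂ x = if x ≤ β₁ then branch₁ x else branch₂ x := by
  by_cases h1 : x ≤ β₁ <;> simp [eq_ite, h1, hx]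

lemma h₂_eq_of_mem_Ioc_β₃_β₅ {x : ℝ} (hx : x ∈ Ioc β₃ β₅) :
    h₂ x = if x ≤ β₄ then branch₄ x else branch₅ x := by
  have h1 : ¬ x ≤ β₁ := by linarith [hx.1, β₁_lt_β₂, β₂_lt_β₃]
  have h2 : ¬ x ≤ β₂ := by linarith [hx.1, β₂_lt_β₃]
  simp [eq_ite, h1, h2, not_le.2 hx.1, hx.2]

lemma h₂_eq_of_β₄_lt {x : ℝ} (hx : β₄ < x) :
    h₂ x = if x ≤ β₅ then branch₅ x else branch₆ x := by
  have h1 : ¬ x ≤ β₁ := by linarith [β₁_lt_β₂, β₂_lt_β₃, β₃_lt_β₄]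
  have h2 : ¬ x ≤ β₂ := by linarith [β₂_lt_β₃, β₃_lt_β₄]
  have h3 : ¬ x ≤ β₃ := by linarith [β₃_lt_β₄]
  simp [eq_ite, h1, h2, h3, not_le.2 hx]

theorem continuous_h₂ : Continuous h₂ := by
  have hβ₄ : ∀ x ≤ β₄, 2*(x - 4) ≠ 0 := fun x hx => by linarith [β₄_mem_Ioo.2]
  have h₅ : Continuous fun x => if x ≤ β₅ then branch₅ x else branch₆ x :=
    continuous_if_le continuous_id continuous_const (by unfold branch₅; fun_prop)
      (by unfold branch₆; fun_prop) fun x hx => hx ▸ branch₅_β₅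
  have h₄ : Continuous fun x => if x ≤ β₄ then branch₄ x else
      if x ≤ β₅ then branch₅ x else branch₆ x :=
    continuous_if_le continuous_id continuous_const
      ((by unfold branch₄; fun_prop (disch := assumption)) : ContinuousOn branch₄ {x | x ≤ β₄})
      h₅.continuousOn fun x hx => by rw [hx, if_pos β₄_lt_β₅.le, branch₄_β₄]
  have h₃ : Continuous fun x => if x ≤ β₃ then x else
      if x ≤ β₄ then branch₄ x else if x ≤ β₅ then branch₅ x else branch₆ x :=
    continuous_if_le continuous_id continuous_const continuousOn_id h₄.continuousOn
      fun x hx => by rw [hx, if_pos β₃_lt_β₄.le, branch₄_β₃]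
  have h₂' : Continuous fun x => if x ≤ β₂ then branch₂ x else if x ≤ β₃ then x else
      if x ≤ β₄ then branch₄ x else if x ≤ β₅ then branch₅ x else branch₆ x :=
    continuous_if_le continuous_id continuous_const (by unfold branch₂; fun_prop)
      h₃.continuousOn fun x hx => by rw [hx, if_pos β₂_lt_β₃.le, branch₂_β₂]
  refine (continuous_congr eq_ite).2 <| continuous_if_le continuous_id continuous_const
    (by unfold branch₁; fun_prop) h₂'.continuousOn
    fun x hx => by rw [hx, if_pos β₁_lt_β₂.le, branch₁_β₁]

theorem differentiableAt_h₂_β₁ : DifferentiableAt ℝ h₂ β₁ :=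
  ((hasDerivAt_branch₁ β₁).if_le
    ((hasDerivAt_branch₂ (by linarith [β₁_mem_Ioo.1])).congr_deriv
      deriv_branch₁_eq_deriv_branch₂_β₁.symm) branch₁_β₁
    |>.congr_of_eventuallyEq <|
      eventually_of_mem (Iio_mem_nhds β₁_lt_β₂) fun _ hx =>
        h₂_eq_of_le_β₂ hx.le).differentiableAt

theorem differentiableAt_h₂_β₄ : DifferentiableAt ℝ h₂ β₄ :=
  ((hasDerivAt_branch₄ (by linarith [β₄_mem_Ioo.2])).if_le
    ((hasDerivAt_branch₅ (by linarith [β₄_mem_Ioo.1])).congr_deriv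
      deriv_branch₄_eq_deriv_branch₅_β₄.symm) branch₄_β₄
    |>.congr_of_eventuallyEq <|
      eventually_of_mem (Ioo_mem_nhds β₃_lt_β₄ β₄_lt_β₅) fun _ hx =>
        h₂_eq_of_mem_Ioc_β₃_β₅ (Ioo_subset_Ioc_self hx)).differentiableAt

theorem differentiableAt_h₂_β₅ : DifferentiableAt ℝ h₂ β₅ :=
  ((hasDerivAt_branch₅ (by linarith [β₅_mem_Ioo.1])).if_le
    ((hasDerivAt_branch₆ β₅).congr_deriv deriv_branch₅_eq_deriv_branch₆_β₅.symm) branch₅_β₅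
    |>.congr_of_eventuallyEq <|
      eventually_of_mem (Ioi_mem_nhds β₄_lt_β₅) fun _ hx => h₂_eq_of_β₄_lt hx).differentiableAt

lemma h₂_zero : h₂ 0 = (5 - √13)/4 := by
  rw [eq_ite, if_pos β₁_mem_Ioo.1.le, branch₁]; norm_num

lemma h₂_one : h₂ 1 = (5 - √13)/4 := by
  rw [h₂_eq_of_β₄_lt (by linarith [β₄_mem_Ioo.2]), if_neg (by linarith [β₅_mem_Ioo.2]), branch₆]
  norm_num
  ring

theorem robbins_n4_h2_properties :
    -- the branch formulas agree at each βᵢ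
    ((5 - β₁ - Real.sqrt (β₁^2 + 6*β₁ + 13))/4 = Real.sqrt (8*β₁ + 54) - β₁ - 7) ∧
    (Real.sqrt (8*β₂ + 54) - β₂ - 7 = β₂) ∧
    (β₃ = -(4*β₃^2 - 6*β₃ + 5)/(2*(β₃ - 4))) ∧
    (-(4*β₄^2 - 6*β₄ + 5)/(2*(β₄ - 4)) = Real.sqrt (12*β₄ + 42) - 6 - β₄) ∧
    (Real.sqrt (12*β₅ + 42) - 6 - β₅ = 3/2 - (β₅ + Real.sqrt (β₅^2 - 4*β₅ + 16))/4) ∧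
    -- h₂ maps [0,1] into [0,1] and is continuous on [0,1]
    (∀ x ∈ Set.Icc (0:ℝ) 1, h₂ x ∈ Set.Icc (0:ℝ) 1) ∧
    ContinuousOn h₂ (Set.Icc (0:ℝ) 1) ∧
    -- h₂ is differentiable at β₁, β₄ and β₅
    DifferentiableAt ℝ h₂ β₁ ∧ DifferentiableAt ℝ h₂ β₄ ∧ DifferentiableAt ℝ h₂ β₅ ∧
    -- endpoint values
    h₂ 0 = (5 - Real.sqrt 13)/4 ∧ h₂ 1 = (5 - Real.sqrt 13)/4 := by
  refine ⟨branch₁_β₁, branch₂_β₂, branch₄_β₃.symm, branch₄_β₄, branch₅_β₅,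
    fun _ hx => h₂_mem_Icc hx, continuous_h₂.continuousOn, differentiableAt_h₂_β₁,
    differentiableAt_h₂_β₄, differentiableAt_h₂_β₅, h₂_zero, h₂_one⟩
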